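/- arXiv:1801.01255 — 10 statements merged into one kernel-verified Lean document; each statement's English description precedes it below -/
import Mathlib

section
/- (Addition of points on a quartic elliptic curve.) Let a₀, a₁, a₂, a₃, a₄, c, x₁, y₁, x₂, y₂ ∈ ℂ with c² = a₄, y₁² = f(x₁), y₂² = f(x₂), and x₁ ≠ x₂, where f(x) = a₄x⁴ + a₃x³ + a₂x² + a₁x + a₀. Define the parabola P(x) = b₂x² + b₁x + b₀ := c(x - x₁)(x - x₂) + (x - x₂)y₁/(x₁ - x₂) + (x - x₁)y₂/(x₂ - x₁) (so b₂ = c, b₁ = -c(x₁ + x₂) + (y₁ - y₂)/(x₁ - x₂), b₀ = c·x₁x₂ + (x₁y₂ - x₂y₁)/(x₁ - x₂)). Assume 2b₁b₂ - a₃ ≠ 0 and set x₃ = -x₁ - x₂ - (2b₀b₂ + b₁² - a₂)/(2b₁b₂ - a₃) and y₃ = -P(x₃). Then y₃² = f(x₃), i.e. the point (x₃, y₃) again lies on the curve y² = f(x). -/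
/-!
Since `c² = a₄`, the quartic terms cancel in `f - P²`, which is therefore a cubic `g`.
The parabola passes through `(x₁, y₁)` and `(x₂, y₂)`, so `x₁` and `x₂` are roots of `g`, and
`x₃` is defined so that `x₁ + x₂ + x₃` is minus the ratio of the two leading coefficients of `g`;
by Vieta `x₃` is the third root. Hence `f(x₃) = P(x₃)² = y₃²`.
-/

theorem cubic_eq_zero_of_add_add_eq {K : Type*} [CommRing K] [IsDomain K]
    {A B C D x₁ x₂ x₃ : K} (hx : x₁ ≠ x₂) (hsum : A * (x₁ + x₂ + x₃) = -B)
    (h₁ : A * x₁ ^ 3 + B * x₁ ^ 2 + C * x₁ + D = 0)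
    (h₂ : A * x₂ ^ 3 + B * x₂ ^ 2 + C * x₂ + D = 0) :
    A * x₃ ^ 3 + B * x₃ ^ 2 + C * x₃ + D = 0 := by
  have h : (x₁ - x₂) * (A * x₃ ^ 3 + B * x₃ ^ 2 + C * x₃ + D) = 0 := by
    linear_combination (x₃ - x₂) * h₁ + (x₁ - x₃) * h₂ +
      ((x₁ - x₂) * x₃ ^ 2 - (x₃ - x₂) * x₁ ^ 2 - (x₁ - x₃) * x₂ ^ 2) * hsum
  exact (mul_eq_zero.mp h).resolve_left (sub_ne_zero.mpr hx)

theorem quadratic_sq_eq_quartic_iff {R : Type*} [CommRing R] {a₀ a₁ a₂ a₃ a₄ b₀ b₁ b₂ : R}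
    (hb₂ : b₂ ^ 2 = a₄) (x : R) :
    (b₂ * x ^ 2 + b₁ * x + b₀) ^ 2 = a₄ * x ^ 4 + a₃ * x ^ 3 + a₂ * x ^ 2 + a₁ * x + a₀ ↔
      (a₃ - 2 * b₁ * b₂) * x ^ 3 + (a₂ - 2 * b₀ * b₂ - b₁ ^ 2) * x ^ 2
        + (a₁ - 2 * b₀ * b₁) * x + (a₀ - b₀ ^ 2) = 0 := by
  constructor <;> intro h <;> linear_combination -h + x ^ 4 * hb₂

theorem quartic_elliptic_curve_point_addition_general
    (a0 a1 a2 a3 a4 c x1 y1 x2 y2 b0 b1 b2 x3 y3 : ℂ)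
    (hc : c ^ 2 = a4)
    (h1 : y1 ^ 2 = a4 * x1 ^ 4 + a3 * x1 ^ 3 + a2 * x1 ^ 2 + a1 * x1 + a0)
    (h2 : y2 ^ 2 = a4 * x2 ^ 4 + a3 * x2 ^ 3 + a2 * x2 ^ 2 + a1 * x2 + a0)
    (hx : x1 ≠ x2)
    (P : ℂ → ℂ)
    (hPdef : ∀ x, P x = c * (x - x1) * (x - x2) + (x - x2) * y1 / (x1 - x2)
        + (x - x1) * y2 / (x2 - x1))
    (hPb : ∀ x, P x = b2 * x ^ 2 + b1 * x + b0)
    (hb2 : b2 = c)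
    (hden : 2 * b1 * b2 - a3 ≠ 0)
    (hx3 : x3 = -x1 - x2 - (2 * b0 * b2 + b1 ^ 2 - a2) / (2 * b1 * b2 - a3))
    (hy3 : y3 = -P x3) :
    y3 ^ 2 = a4 * x3 ^ 4 + a3 * x3 ^ 3 + a2 * x3 ^ 2 + a1 * x3 + a0 := by
  have hx₁₂ : x1 - x2 ≠ 0 := sub_ne_zero.mpr hx
  have hx₂₁ : x2 - x1 ≠ 0 := sub_ne_zero.mpr hx.symm
  have hP1 : P x1 = y1 := by rw [hPdef]; field_simp; ring
  have hP2 : P x2 = y2 := by rw [hPdef]; field_simp; ring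
  have on_curve_iff (x : ℂ) := hPb x ▸ quadratic_sq_eq_quartic_iff (a₀ := a0) (a₁ := a1)
    (a₂ := a2) (a₃ := a3) (b₀ := b0) (b₁ := b1) (hb2 ▸ hc) x
  rw [hy3, neg_sq, on_curve_iff]
  refine cubic_eq_zero_of_add_add_eq hx ?_ ((on_curve_iff x1).mp (hP1 ▸ h1))
    ((on_curve_iff x2).mp (hP2 ▸ h2))
  rw [hx3]
  field_simp
  ring

/-- Addition of points on a quartic elliptic curve
`y² = f(x) = a₄x⁴ + a₃x³ + a₂x² + a₁x + a₀`: if `(x₁,y₁)` and `(x₂,y₂)` lie on the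
curve, `x₁ ≠ x₂`, `P` is the interpolating parabola with leading coefficient `c = √a₄`,
and `x₃, y₃` are defined by the chord-addition formula, then `(x₃,y₃)` lies on the
curve again. -/
theorem quartic_elliptic_curve_point_addition
    (a0 a1 a2 a3 a4 c x1 y1 x2 y2 b0 b1 b2 x3 y3 : ℂ)
    (hc : c ^ 2 = a4)
    (h1 : y1 ^ 2 = a4 * x1 ^ 4 + a3 * x1 ^ 3 + a2 * x1 ^ 2 + a1 * x1 + a0)
    (h2 : y2 ^ 2 = a4 * x2 ^ 4 + a3 * x2 ^ 3 + a2 * x2 ^ 2 + a1 * x2 + a0)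
    (hx : x1 ≠ x2)
    (P : ℂ → ℂ)
    (hPdef : ∀ x, P x = c * (x - x1) * (x - x2) + (x - x2) * y1 / (x1 - x2)
        + (x - x1) * y2 / (x2 - x1))
    (hPb : ∀ x, P x = b2 * x ^ 2 + b1 * x + b0)
    (hb2 : b2 = c)
    (hb1 : b1 = -c * (x1 + x2) + (y1 - y2) / (x1 - x2))
    (hb0 : b0 = c * x1 * x2 + (x1 * y2 - x2 * y1) / (x1 - x2))
    (hden : 2 * b1 * b2 - a3 ≠ 0)
    (hx3 : x3 = -x1 - x2 - (2 * b0 * b2 + b1 ^ 2 - a2) / (2 * b1 * b2 - a3))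
    (hy3 : y3 = -P x3) :
    y3 ^ 2 = a4 * x3 ^ 4 + a3 * x3 ^ 3 + a2 * x3 ^ 2 + a1 * x3 + a0 :=
  quartic_elliptic_curve_point_addition_general a0 a1 a2 a3 a4 c x1 y1 x2 y2 b0 b1 b2 x3 y3 hc h1 h2
    hx P hPdef hPb hb2 hden hx3 hy3
end

section
/- (Cubic factorization underlying the addition law.) Under the hypotheses of the addition formula — a₀,…,a₄, c, x₁, y₁, x₂, y₂ ∈ ℂ with c² = a₄, y₁² = f(x₁), y₂² = f(x₂), x₁ ≠ x₂, P(x) = b₂x² + b₁x + b₀ the interpolating parabola with b₂ = c, and 2b₁b₂ - a₃ ≠ 0, x₃ = -x₁ - x₂ - (2b₀b₂ + b₁² - a₂)/(2b₁b₂ - a₃) — one has the polynomial identity in ℂ[X]: f(X) - P(X)² = (a₃ - 2b₁b₂)·(X - x₁)(X - x₂)(X - x₃), where f(X) = a₄X⁴ + a₃X³ + a₂X² + a₁X + a₀. -/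
/-!
Because `c² = a₄`, the quartic terms cancel and `f - P²` is a cubic with leading coefficient
`a₃ - 2b₁b₂`. It vanishes at `x₁` and `x₂` since `P` interpolates the two points of the curve, and
its third root is then forced by Vieta's formula for the sum of the roots, which is how `x₃` is
defined.
-/

open Polynomial

theorem cubic_eq_C_mul_X_sub_C_of_two_roots {R : Type*} [CommRing R] [IsDomain R]
    {d e g h x1 x2 x3 : R} (hx : x1 ≠ x2) (hsum : d * (x1 + x2 + x3) + e = 0)
    (h1 : d * x1 ^ 3 + e * x1 ^ 2 + g * x1 + h = 0)
    (h2 : d * x2 ^ 3 + e * x2 ^ 2 + g * x2 + h = 0) :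
    C d * X ^ 3 + C e * X ^ 2 + C g * X + C h
      = C d * (X - C x1) * (X - C x2) * (X - C x3) := by
  obtain rfl : e = -(d * (x1 + x2 + x3)) := by linear_combination hsum
  obtain rfl : g = d * (x1 * x2 + x1 * x3 + x2 * x3) := by
    refine mul_right_cancel₀ (sub_ne_zero.mpr hx) ?_
    linear_combination h1 - h2
  obtain rfl : h = -(d * (x1 * x2 * x3)) := by linear_combination h1
  simp only [map_add, map_mul, map_neg]
  ring

theorem interpolating_parabola_spec {K : Type*} [Field K] (c x1 y1 x2 y2 : K) (hx : x1 ≠ x2) :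
    c * x1 ^ 2 + (-c * (x1 + x2) + (y1 - y2) / (x1 - x2)) * x1
        + (c * x1 * x2 + (x1 * y2 - x2 * y1) / (x1 - x2)) = y1 ∧
      c * x2 ^ 2 + (-c * (x1 + x2) + (y1 - y2) / (x1 - x2)) * x2
        + (c * x1 * x2 + (x1 * y2 - x2 * y1) / (x1 - x2)) = y2 := by
  have hd : x1 - x2 ≠ 0 := sub_ne_zero.mpr hx
  constructor <;> field_simp <;> ring

theorem quartic_sub_sq_quadratic {R : Type*} [CommRing R] (a0 a1 a2 a3 b0 b1 b2 : R) :
    (C (b2 ^ 2) * X ^ 4 + C a3 * X ^ 3 + C a2 * X ^ 2 + C a1 * X + C a0)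
        - (C b2 * X ^ 2 + C b1 * X + C b0) ^ 2
      = C (a3 - 2 * b1 * b2) * X ^ 3 + C (a2 - b1 ^ 2 - 2 * b0 * b2) * X ^ 2
        + C (a1 - 2 * b0 * b1) * X + C (a0 - b0 ^ 2) := by
  simp only [map_sub, map_mul, map_pow, map_ofNat]
  ring

/-- Cubic factorization underlying the addition law on a quartic elliptic
curve: with `P` the interpolating parabola through `(x₁,y₁)` and `(x₂,y₂)` with leading
coefficient `c = √a₄`, and `x₃` the chord-addition abscissa, one has the polynomial
identity `f(X) - P(X)² = (a₃ - 2b₁b₂)(X - x₁)(X - x₂)(X - x₃)` in `ℂ[X]`. -/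
theorem quartic_elliptic_curve_addition_cubic_factorization
    (a0 a1 a2 a3 a4 c x1 y1 x2 y2 b0 b1 b2 x3 : ℂ)
    (hc : c ^ 2 = a4)
    (h1 : y1 ^ 2 = a4 * x1 ^ 4 + a3 * x1 ^ 3 + a2 * x1 ^ 2 + a1 * x1 + a0)
    (h2 : y2 ^ 2 = a4 * x2 ^ 4 + a3 * x2 ^ 3 + a2 * x2 ^ 2 + a1 * x2 + a0)
    (hx : x1 ≠ x2)
    (hb2 : b2 = c)
    (hb1 : b1 = -c * (x1 + x2) + (y1 - y2) / (x1 - x2))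
    (hb0 : b0 = c * x1 * x2 + (x1 * y2 - x2 * y1) / (x1 - x2))
    (hden : 2 * b1 * b2 - a3 ≠ 0)
    (hx3 : x3 = -x1 - x2 - (2 * b0 * b2 + b1 ^ 2 - a2) / (2 * b1 * b2 - a3)) :
    (C a4 * X ^ 4 + C a3 * X ^ 3 + C a2 * X ^ 2 + C a1 * X + C a0)
        - (C b2 * X ^ 2 + C b1 * X + C b0) ^ 2
      = C (a3 - 2 * b1 * b2) * (X - C x1) * (X - C x2) * (X - C x3) := by
  obtain ⟨hP1, hP2⟩ : b2 * x1 ^ 2 + b1 * x1 + b0 = y1 ∧ b2 * x2 ^ 2 + b1 * x2 + b0 = y2 := by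
    rw [hb2, hb1, hb0]
    exact interpolating_parabola_spec c x1 y1 x2 y2 hx
  have hsum : (a3 - 2 * b1 * b2) * (x1 + x2 + x3) + (a2 - b1 ^ 2 - 2 * b0 * b2) = 0 := by
    rw [hx3]
    field_simp [hden]
    ring
  subst hc hb2
  rw [quartic_sub_sq_quadratic]
  refine cubic_eq_C_mul_X_sub_C_of_two_roots hx hsum ?_ ?_
  · linear_combination -h1 - (b2 * x1 ^ 2 + b1 * x1 + b0 + y1) * hP1
  · linear_combination -h2 - (b2 * x2 ^ 2 + b1 * x2 + b0 + y2) * hP2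
end

section
/- (Doubling a point on a quartic elliptic curve.) Let a₀, a₁, a₂, a₃, a₄, c, x₁, y₁ ∈ ℂ with c² = a₄, y₁ ≠ 0, and y₁² = f(x₁) where f(x) = a₄x⁴ + a₃x³ + a₂x² + a₁x + a₀. Define P(x) = b₂x² + b₁x + b₀ := c(x - x₁)² + (x - x₁)(4a₄x₁³ + 3a₃x₁² + 2a₂x₁ + a₁)/(2y₁) + y₁. Assume 2b₁c - a₃ ≠ 0 and set x₂ = -2x₁ - (2b₀c + b₁² - a₂)/(2b₁c - a₃) and y₂ = -P(x₂). Then y₂² = f(x₂), i.e. the doubled point [2](x₁,y₁) = (x₂,y₂) again lies on the curve y² = f(x). -/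
/-- Doubling a point on a quartic elliptic curve
`y² = f(x) = a₄x⁴ + a₃x³ + a₂x² + a₁x + a₀`: if `(x₁,y₁)` lies on the curve, `y₁ ≠ 0`,
`P` is the Hermite (tangent) parabola with leading coefficient `c = √a₄`, and `x₂, y₂`
are given by the doubling formula, then `(x₂,y₂) = [2](x₁,y₁)` lies on the curve. -/
theorem quartic_elliptic_curve_point_doubling
    (a0 a1 a2 a3 a4 c x1 y1 b0 b1 b2 x2 y2 : ℂ)
    (hc : c ^ 2 = a4) (hy1 : y1 ≠ 0)
    (h1 : y1 ^ 2 = a4 * x1 ^ 4 + a3 * x1 ^ 3 + a2 * x1 ^ 2 + a1 * x1 + a0)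
    (P : ℂ → ℂ)
    (hPdef : ∀ x, P x = c * (x - x1) ^ 2
        + (x - x1) * (4 * a4 * x1 ^ 3 + 3 * a3 * x1 ^ 2 + 2 * a2 * x1 + a1) / (2 * y1)
        + y1)
    (hPb : ∀ x, P x = b2 * x ^ 2 + b1 * x + b0)
    (hb2 : b2 = c)
    (hden : 2 * b1 * c - a3 ≠ 0)
    (hx2 : x2 = -2 * x1 - (2 * b0 * c + b1 ^ 2 - a2) / (2 * b1 * c - a3))
    (hy2 : y2 = -P x2) :
    y2 ^ 2 = a4 * x2 ^ 4 + a3 * x2 ^ 3 + a2 * x2 ^ 2 + a1 * x2 + a0 := by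
  subst hb2 hc
  have e0 := (hPdef 0).symm.trans (hPb 0)
  have e1 := (hPdef 1).symm.trans (hPb 1)
  have em := (hPdef (-1)).symm.trans (hPb (-1))
  have hg1 : b1 = -2*b2*x1 + (4*(b2^2)*x1^3+3*a3*x1^2+2*a2*x1+a1)/(2*y1) := by
    linear_combination (em - e1)/2
  have hg0 : b0 = b2*x1^2 - x1*((4*(b2^2)*x1^3+3*a3*x1^2+2*a2*x1+a1)/(2*y1)) + y1 := by
    linear_combination -e0
  have hD : (2*b1*b2 - a3) * (x2 - x1)
      = -3*x1*(2*b1*b2 - a3) - (2*b0*b2 + b1^2 - a2) := by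
    rw [hx2]; field_simp; ring
  have hDC : (2*b1*b2 - a3) * (x2 - x1)
      = a2 + 6*b2^2*x1^2 + 3*a3*x1 - 2*b2*y1
        - (4*b2^2*x1^3+3*a3*x1^2+2*a2*x1+a1)^2/(4*y1^2) := by
    rw [hD, hg0, hg1]; field_simp; ring
  have hB : 2*b1*b2 - a3
      = -(a3 + 4*b2^2*x1 - b2*(4*b2^2*x1^3+3*a3*x1^2+2*a2*x1+a1)/y1) := by
    rw [hg1]; field_simp; ring
  have key : (b2*(x2-x1)^2 + (x2-x1)*(4*b2^2*x1^3+3*a3*x1^2+2*a2*x1+a1)/(2*y1) + y1)^2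
      - (b2^2*x2^4+a3*x2^3+a2*x2^2+a1*x2+a0)
      = (y1^2 - (b2^2*x1^4+a3*x1^3+a2*x1^2+a1*x1+a0))
        - (x2-x1)^2*((a2 + 6*b2^2*x1^2 + 3*a3*x1 - 2*b2*y1
              - (4*b2^2*x1^3+3*a3*x1^2+2*a2*x1+a1)^2/(4*y1^2))
            + (a3 + 4*b2^2*x1 - b2*(4*b2^2*x1^3+3*a3*x1^2+2*a2*x1+a1)/y1)*(x2-x1)) := by
    field_simp; ring
  rw [hy2, hPdef]
  linear_combination key + h1 + (x2-x1)^2 * hDC - (x2-x1)^3 * hB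
end

section
/- (Tripling a point on a quartic elliptic curve.) Let a₀, a₁, a₂, a₃, a₄, x₁, y₁ ∈ ℂ with y₁ ≠ 0 and y₁² = f(x₁), where f(x) = a₄x⁴ + a₃x³ + a₂x² + a₁x + a₀. Define P(x) = b₂x² + b₁x + b₀ := -(x - x₁)²(4a₄x₁³ + 3a₃x₁² + 2a₂x₁ + a₁)²/(8y₁³) + (x - x₁)·(x(6a₄x₁² + 3a₃x₁ + a₂) - 2a₄x₁³ + a₂x₁ + a₁)/(2y₁) + y₁. Assume a₄ - b₂² ≠ 0 and set x₂ = -3x₁ - (a₃ - 2b₁b₂)/(a₄ - b₂²) and y₂ = -P(x₂). Then y₂² = f(x₂), i.e. the tripled point [3](x₁,y₁) = (x₂,y₂) again lies on the curve y² = f(x). -/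
/-- Tripling a point on a quartic elliptic curve
`y² = f(x) = a₄x⁴ + a₃x³ + a₂x² + a₁x + a₀`: if `(x₁,y₁)` lies on the curve, `y₁ ≠ 0`,
`P` is the quadratic meeting the curve at `(x₁,y₁)` with multiplicity three, and
`x₂, y₂` are given by the tripling formula, then `(x₂,y₂) = [3](x₁,y₁)` lies on the
curve. -/
theorem quartic_elliptic_curve_point_tripling
    (a0 a1 a2 a3 a4 x1 y1 b0 b1 b2 x2 y2 : ℂ)
    (hy1 : y1 ≠ 0)
    (h1 : y1 ^ 2 = a4 * x1 ^ 4 + a3 * x1 ^ 3 + a2 * x1 ^ 2 + a1 * x1 + a0)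
    (P : ℂ → ℂ)
    (hPdef : ∀ x, P x =
        -(x - x1) ^ 2 * (4 * a4 * x1 ^ 3 + 3 * a3 * x1 ^ 2 + 2 * a2 * x1 + a1) ^ 2
            / (8 * y1 ^ 3)
        + (x - x1) * (x * (6 * a4 * x1 ^ 2 + 3 * a3 * x1 + a2)
            - 2 * a4 * x1 ^ 3 + a2 * x1 + a1) / (2 * y1)
        + y1)
    (hPb : ∀ x, P x = b2 * x ^ 2 + b1 * x + b0)
    (hden : a4 - b2 ^ 2 ≠ 0)
    (hx2 : x2 = -3 * x1 - (a3 - 2 * b1 * b2) / (a4 - b2 ^ 2))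
    (hy2 : y2 = -P x2) :
    y2 ^ 2 = a4 * x2 ^ 4 + a3 * x2 ^ 3 + a2 * x2 ^ 2 + a1 * x2 + a0 := by
  set D := 4 * a4 * x1 ^ 3 + 3 * a3 * x1 ^ 2 + 2 * a2 * x1 + a1 with hD
  set C := 6 * a4 * x1 ^ 2 + 3 * a3 * x1 + a2 with hC
  set G := -2 * a4 * x1 ^ 3 + a2 * x1 + a1 with hG
  have key : ∀ x, b2 * x ^ 2 + b1 * x + b0 =
      -(x - x1) ^ 2 * D ^ 2 / (8 * y1 ^ 3)
        + (x - x1) * (x * C - 2 * a4 * x1 ^ 3 + a2 * x1 + a1) / (2 * y1) + y1 :=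
    fun x => (hPb x).symm.trans (hPdef x)
  have eb2 : b2 = -D ^ 2 / (8 * y1 ^ 3) + C / (2 * y1) := by
    linear_combination (key (x1 + 1) + key (x1 - 1)) / 2 - key x1
  have eb1 : b1 = 2 * x1 * D ^ 2 / (8 * y1 ^ 3) + (G - x1 * C) / (2 * y1) := by
    linear_combination (key (x1 + 1) - key (x1 - 1)) / 2 - 2 * x1 * eb2
  have hb2 : 8 * y1 ^ 3 * b2 = -D ^ 2 + 4 * y1 ^ 2 * C := by
    rw [eb2]; field_simp; ring
  have hb1 : 8 * y1 ^ 3 * b1 = 2 * x1 * D ^ 2 + 4 * y1 ^ 2 * (G - x1 * C) := by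
    rw [eb1]; field_simp; ring
  have hQ : 8 * y1 ^ 3 * P x2 =
      -(x2 - x1) ^ 2 * D ^ 2 + 4 * y1 ^ 2 * (x2 - x1) * (x2 * C + G) + 8 * y1 ^ 4 := by
    rw [hPdef x2]; field_simp; ring
  have hz : (a4 - b2 ^ 2) * (x2 + 3 * x1) + (a3 - 2 * b1 * b2) = 0 := by
    rw [hx2]; field_simp; ring
  have hsq2 : (-D ^ 2 + 4 * y1 ^ 2 * C) ^ 2 = 64 * y1 ^ 6 * b2 ^ 2 := by
    rw [← hb2]; ring
  have hsq1 : (2 * x1 * D ^ 2 + 4 * y1 ^ 2 * (G - x1 * C)) * (-D ^ 2 + 4 * y1 ^ 2 * C)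
      = 64 * y1 ^ 6 * (b1 * b2) := by
    rw [← hb1, ← hb2]; ring
  have hz64 : (64 * y1 ^ 6 * a4 - (-D ^ 2 + 4 * y1 ^ 2 * C) ^ 2) * (x2 + 3 * x1)
      + (64 * y1 ^ 6 * a3
        - 2 * ((2 * x1 * D ^ 2 + 4 * y1 ^ 2 * (G - x1 * C)) * (-D ^ 2 + 4 * y1 ^ 2 * C))) = 0 := by
    rw [hsq1, hsq2]; linear_combination 64 * y1 ^ 6 * hz
  have main : 64 * y1 ^ 6 * (a4 * x2 ^ 4 + a3 * x2 ^ 3 + a2 * x2 ^ 2 + a1 * x2 + a0)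
      - (-(x2 - x1) ^ 2 * D ^ 2 + 4 * y1 ^ 2 * (x2 - x1) * (x2 * C + G) + 8 * y1 ^ 4) ^ 2
      = (x2 - x1) ^ 3 *
        ((64 * y1 ^ 6 * a4 - (-D ^ 2 + 4 * y1 ^ 2 * C) ^ 2) * (x2 + 3 * x1)
          + (64 * y1 ^ 6 * a3
            - 2 * ((2 * x1 * D ^ 2 + 4 * y1 ^ 2 * (G - x1 * C)) * (-D ^ 2 + 4 * y1 ^ 2 * C)))) := by
    linear_combination (-64 * y1 ^ 6) * h1
  have h64 : (64 : ℂ) * y1 ^ 6 ≠ 0 := by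
    simp [hy1]
  apply mul_left_cancel₀ h64
  linear_combination 64 * y1 ^ 6 * (y2 - P x2) * hy2
    + (8 * y1 ^ 3 * P x2
        + (-(x2 - x1) ^ 2 * D ^ 2 + 4 * y1 ^ 2 * (x2 - x1) * (x2 * C + G) + 8 * y1 ^ 4)) * hQ
    - main - (x2 - x1) ^ 3 * hz64
end

section
/- (Third-order tangency of the parabola used for tripling.) Let a₀, a₁, a₂, a₃, a₄, x₁, y₁ ∈ ℂ with y₁ ≠ 0, y₁² = f(x₁), where f(X) = a₄X⁴ + a₃X³ + a₂X² + a₁X + a₀, and let P(X) = -(X - x₁)²(4a₄x₁³ + 3a₃x₁² + 2a₂x₁ + a₁)²/(8y₁³) + (X - x₁)(X(6a₄x₁² + 3a₃x₁ + a₂) - 2a₄x₁³ + a₂x₁ + a₁)/(2y₁) + y₁. Then (X - x₁)³ divides the polynomial f(X) - P(X)² in ℂ[X]. -/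
/-!
In characteristic zero, `(X - x₁)³ ∣ g` as soon as `g`, `g'` and `g''` vanish at `x₁`. For
`g = f - P²` with `P(x₁) = y₁ ≠ 0` this asks for `P'(x₁) = f'(x₁) / (2y₁)` and
`P''(x₁) = (f''(x₁) - 2P'(x₁)²) / (2y₁)`, and the coefficients of the parabola are chosen to
satisfy exactly these two equations.
-/

open Polynomial

namespace Polynomial

variable {R : Type*} [CommRing R] [NoZeroDivisors R] [CharZero R]

theorem X_sub_C_pow_succ_dvd_of_isRoot_iterate_derivative {p : R[X]} {t : R} {n : ℕ}
    (hroot : ∀ m ≤ n, (derivative^[m] p).IsRoot t) : (X - C t) ^ (n + 1) ∣ p := by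
  rcases eq_or_ne p 0 with rfl | hp
  · exact dvd_zero _
  exact (le_rootMultiplicity_iff hp).1 (lt_rootMultiplicity_of_isRoot_iterate_derivative hp hroot)

theorem X_sub_C_pow_three_dvd_sub_sq {f P : R[X]} {t : R}
    (h₀ : P.eval t ^ 2 = f.eval t)
    (h₁ : 2 * P.eval t * P.derivative.eval t = f.derivative.eval t)
    (h₂ : 2 * (P.derivative.eval t ^ 2 + P.eval t * P.derivative.derivative.eval t) =
      f.derivative.derivative.eval t) :
    (X - C t) ^ 3 ∣ f - P ^ 2 := by
  refine X_sub_C_pow_succ_dvd_of_isRoot_iterate_derivative fun m hm ↦ ?_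
  interval_cases m <;>
    simp only [Function.iterate_succ, Function.iterate_zero, Function.comp_apply, id_eq,
      IsRoot, derivative_sub, derivative_sq, derivative_mul, derivative_C, eval_sub, eval_add,
      eval_mul, eval_pow, eval_C, zero_mul, zero_add, sub_eq_zero]
  · exact h₀.symm
  · exact h₁.symm
  · linear_combination -h₂

end Polynomial

/-- Third-order tangency of the parabola used for tripling: the quadratic
`P` below meets the quartic curve `y² = f(x)` at `(x₁,y₁)` with intersection
multiplicity at least three, i.e. `(X - x₁)³` divides `f(X) - P(X)²` in `ℂ[X]`. -/
theorem tripling_parabola_third_order_tangency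
    (a0 a1 a2 a3 a4 x1 y1 : ℂ)
    (hy1 : y1 ≠ 0)
    (h1 : y1 ^ 2 = a4 * x1 ^ 4 + a3 * x1 ^ 3 + a2 * x1 ^ 2 + a1 * x1 + a0) :
    (X - C x1) ^ 3 ∣
      (C a4 * X ^ 4 + C a3 * X ^ 3 + C a2 * X ^ 2 + C a1 * X + C a0)
        - (C (-(4 * a4 * x1 ^ 3 + 3 * a3 * x1 ^ 2 + 2 * a2 * x1 + a1) ^ 2
              / (8 * y1 ^ 3)) * (X - C x1) ^ 2
            + C (2 * y1)⁻¹ * (X - C x1)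
              * (X * C (6 * a4 * x1 ^ 2 + 3 * a3 * x1 + a2)
                  + C (-2 * a4 * x1 ^ 3 + a2 * x1 + a1))
            + C y1) ^ 2 := by
  refine X_sub_C_pow_three_dvd_sub_sq (by simpa using h1) ?_ ?_ <;>
    simp only [derivative_add, derivative_mul, derivative_pow, derivative_sub, derivative_X,
      derivative_C, eval_add, eval_sub, eval_mul, eval_pow, eval_C, eval_X, eval_zero, eval_one,
      derivative_zero, derivative_one, sub_self] <;>
    field_simp <;>
    ring
end

section
/- (Proposition 1: the addition map preserves the Duffing Hamiltonian.) Let A, B, s, q, p, λ, μ ∈ ℂ with s² = -B, q ≠ λ, and suppose the two points lie on the same level curve of the Hamiltonian: p² + A·q² + B·q⁴ = μ² + A·λ² + B·λ⁴. Define the parabola P(x) = s·x² + b₁x + b₀ := s(x - q)(x - λ) + (x - λ)p/(q - λ) + (x - q)μ/(λ - q), and assume b₁·s ≠ 0. Set q' = -q - λ - (2b₀s + b₁² + A)/(2b₁s) and p' = -P(q'). Then p'² + A·q'² + B·q'⁴ = p² + A·q² + B·q⁴, i.e. the discrete map (q, p) ↦ (q', p') obtained by adding the point (λ, μ) on the elliptic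 curve y² + Ax² + Bx⁴ - E = 0 preserves the Hamiltonian H = p² + Aq² + Bq⁴ of the Duffing oscillator. -/
/-!
The parabola `y = P(x)` with leading coefficient `s`, `s² = -B`, turns `H(x, P x) - E` into a
cubic in `x`, since the quartic terms cancel. That cubic vanishes at the two interpolated points
`q` and `λ`, and `q'` is chosen so that `q + λ + q'` is the sum of its roots, so by Vieta it
vanishes at `q'` too. As `H` is even in `p`, the reflected point `(q', -P q')` lies on the same
level curve.
-/

section Cubic

variable {R : Type*} [CommRing R] [IsDomain R]

theorem cubic_eq_zero_of_two_roots_of_root_sum {c₃ c₂ c₁ c₀ a b c : R} (hab : a ≠ b)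
    (ha : c₃ * a ^ 3 + c₂ * a ^ 2 + c₁ * a + c₀ = 0)
    (hb : c₃ * b ^ 3 + c₂ * b ^ 2 + c₁ * b + c₀ = 0)
    (hsum : c₃ * (a + b + c) + c₂ = 0) :
    c₃ * c ^ 3 + c₂ * c ^ 2 + c₁ * c + c₀ = 0 := by
  have key : (a - b) * (c₃ * c ^ 3 + c₂ * c ^ 2 + c₁ * c + c₀) = 0 := by
    linear_combination (c - b) * ha - (c - a) * hb + (a - b) * (c - a) * (c - b) * hsum
  exact (mul_eq_zero.mp key).resolve_left (sub_ne_zero.mpr hab)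

end Cubic

section Duffing

variable {R : Type*} [CommRing R]

def duffingHamiltonian (A B q p : R) : R := p ^ 2 + A * q ^ 2 + B * q ^ 4

theorem duffingHamiltonian_neg (A B q p : R) :
    duffingHamiltonian A B q (-p) = duffingHamiltonian A B q p := by
  simp only [duffingHamiltonian, neg_sq]

theorem duffingHamiltonian_parabola {A B s : R} (hs : s ^ 2 = -B) (b₁ b₀ x : R) :
    duffingHamiltonian A B x (s * x ^ 2 + b₁ * x + b₀) =
      2 * s * b₁ * x ^ 3 + (b₁ ^ 2 + 2 * s * b₀ + A) * x ^ 2 + 2 * b₁ * b₀ * x + b₀ ^ 2 := by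
  unfold duffingHamiltonian
  linear_combination x ^ 4 * hs

theorem duffingHamiltonian_parabola_third_point [IsDomain R] {A B s b₁ b₀ q lam q' : R}
    (hs : s ^ 2 = -B) (hql : q ≠ lam)
    (hlevel : duffingHamiltonian A B q (s * q ^ 2 + b₁ * q + b₀) =
      duffingHamiltonian A B lam (s * lam ^ 2 + b₁ * lam + b₀))
    (hsum : 2 * s * b₁ * (q + lam + q') + (b₁ ^ 2 + 2 * s * b₀ + A) = 0) :
    duffingHamiltonian A B q' (s * q' ^ 2 + b₁ * q' + b₀) =
      duffingHamiltonian A B q (s * q ^ 2 + b₁ * q + b₀) := by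
  set E := duffingHamiltonian A B q (s * q ^ 2 + b₁ * q + b₀)
  have hroot : ∀ x, duffingHamiltonian A B x (s * x ^ 2 + b₁ * x + b₀) = E ↔
      2 * s * b₁ * x ^ 3 + (b₁ ^ 2 + 2 * s * b₀ + A) * x ^ 2 + 2 * b₁ * b₀ * x + (b₀ ^ 2 - E)
        = 0 := fun x => by
    rw [duffingHamiltonian_parabola hs, ← sub_eq_zero]
    ring_nf
  exact (hroot q').mpr <| cubic_eq_zero_of_two_roots_of_root_sum hql
    ((hroot q).mp rfl) ((hroot lam).mp hlevel.symm) hsum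

end Duffing

/-- Proposition 1: the discrete map `(q,p) ↦ (q',p')` obtained by adding
the point `(λ,μ)` on the elliptic curve `y² + Ax² + Bx⁴ - E = 0` (level set of the
Duffing Hamiltonian) preserves the Hamiltonian `H = p² + Aq² + Bq⁴`. -/
theorem duffing_addition_map_preserves_hamiltonian
    (A B s q p lam mu b0 b1 q' p' : ℂ)
    (hs : s ^ 2 = -B) (hql : q ≠ lam)
    (hlevel : p ^ 2 + A * q ^ 2 + B * q ^ 4 = mu ^ 2 + A * lam ^ 2 + B * lam ^ 4)
    (P : ℂ → ℂ)
    (hPdef : ∀ x, P x = s * (x - q) * (x - lam) + (x - lam) * p / (q - lam)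
        + (x - q) * mu / (lam - q))
    (hPb : ∀ x, P x = s * x ^ 2 + b1 * x + b0)
    (hden : b1 * s ≠ 0)
    (hq' : q' = -q - lam - (2 * b0 * s + b1 ^ 2 + A) / (2 * b1 * s))
    (hp' : p' = -P q') :
    p' ^ 2 + A * q' ^ 2 + B * q' ^ 4 = p ^ 2 + A * q ^ 2 + B * q ^ 4 := by
  have hPq : P q = p := by
    rw [hPdef]; simp [sub_ne_zero.mpr hql]
  have hPlam : P lam = mu := by
    rw [hPdef]; simp [sub_ne_zero.mpr hql.symm]
  have hsum : 2 * s * b1 * (q + lam + q') + (b1 ^ 2 + 2 * s * b0 + A) = 0 := by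
    rw [hq']
    field_simp [left_ne_zero_of_mul hden, right_ne_zero_of_mul hden]
    ring
  have hlevel' : duffingHamiltonian A B q (P q) = duffingHamiltonian A B lam (P lam) := by
    rw [hPq, hPlam]; exact hlevel
  rw [hPb, hPb] at hlevel'
  calc p' ^ 2 + A * q' ^ 2 + B * q' ^ 4 = duffingHamiltonian A B q' (P q') := by
        rw [hp', ← duffingHamiltonian_neg]; rfl
    _ = duffingHamiltonian A B q (P q) := by
        rw [hPb, hPb]; exact duffingHamiltonian_parabola_third_point hs hql hlevel' hsum
    _ = p ^ 2 + A * q ^ 2 + B * q ^ 4 := by rw [hPq]; rfl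
end

section
/- (Proposition 2, doubling map: preservation of the Hamiltonian.) Let A, B, s, q, p ∈ ℂ with s² = -B, s ≠ 0, q ≠ 0, p ≠ 0. Define q' = (2Bq⁴ + Aq² + p²)/(2·s·q·p) and p' = (1/(4s))·((4Bq⁴ - p²)/q² + q²(4B²q⁴ + 4ABq² + A²)/p²). Then p'² + A·q'² + B·q'⁴ = p² + A·q² + B·q⁴, i.e. the discrete map (q, p) ↦ (q', p') induced by doubling a point on the elliptic curve y² + Ax² + Bx⁴ - E = 0 preserves the Hamiltonian H = p² + Aq² + Bq⁴ of the Duffing oscillator. -/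
/-- Proposition 2, doubling map: the discrete map `(q,p) ↦ (q',p')`
induced by doubling a point on the elliptic curve `y² + Ax² + Bx⁴ - E = 0` preserves
the Duffing Hamiltonian `H = p² + Aq² + Bq⁴`. Here `s = √(-B)`. -/
theorem duffing_doubling_map_preserves_hamiltonian
    (A B s q p q' p' : ℂ)
    (hs : s ^ 2 = -B) (hs0 : s ≠ 0) (hq : q ≠ 0) (hp : p ≠ 0)
    (hq' : q' = (2 * B * q ^ 4 + A * q ^ 2 + p ^ 2) / (2 * s * q * p))
    (hp' : p' = 1 / (4 * s) * ((4 * B * q ^ 4 - p ^ 2) / q ^ 2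
        + q ^ 2 * (4 * B ^ 2 * q ^ 4 + 4 * A * B * q ^ 2 + A ^ 2) / p ^ 2)) :
    p' ^ 2 + A * q' ^ 2 + B * q' ^ 4 = p ^ 2 + A * q ^ 2 + B * q ^ 4 := by
  have hB : B = -s ^ 2 := by linear_combination hs
  subst hB
  have hNq : q' * (2 * s * q * p) = 2 * (-s ^ 2) * q ^ 4 + A * q ^ 2 + p ^ 2 := by
    rw [hq']; field_simp
  have hNp : p' * (4 * s * q ^ 2 * p ^ 2)
      = (4 * (-s ^ 2) * q ^ 4 - p ^ 2) * p ^ 2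
        + q ^ 4 * (4 * (-s ^ 2) ^ 2 * q ^ 4 + 4 * A * (-s ^ 2) * q ^ 2 + A ^ 2) := by
    rw [hp']; field_simp
  have hD : (16 : ℂ) * s ^ 4 * q ^ 4 * p ^ 4 ≠ 0 := by
    simp [hs0, hq, hp]
  apply mul_left_cancel₀ hD
  linear_combination
      (s ^ 2 * (p' * (4 * s * q ^ 2 * p ^ 2)
        + ((4 * (-s ^ 2) * q ^ 4 - p ^ 2) * p ^ 2
          + q ^ 4 * (4 * (-s ^ 2) ^ 2 * q ^ 4 + 4 * A * (-s ^ 2) * q ^ 2 + A ^ 2)))) * hNp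
    + (4 * A * s ^ 2 * q ^ 2 * p ^ 2
        * (q' * (2 * s * q * p) + (2 * (-s ^ 2) * q ^ 4 + A * q ^ 2 + p ^ 2))) * hNq
    + ((-s ^ 2) * ((q' * (2 * s * q * p)) ^ 3
        + (q' * (2 * s * q * p)) ^ 2 * (2 * (-s ^ 2) * q ^ 4 + A * q ^ 2 + p ^ 2)
        + (q' * (2 * s * q * p)) * (2 * (-s ^ 2) * q ^ 4 + A * q ^ 2 + p ^ 2) ^ 2
        + (2 * (-s ^ 2) * q ^ 4 + A * q ^ 2 + p ^ 2) ^ 3)) * hNq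
end

section
/- (Proposition 2, tripling map: preservation of the Hamiltonian.) Let A, B, q, p ∈ ℂ with p ≠ 0 and D := 4B²q⁸ + 4ABq⁶ + 8Bq⁴p² + A²q⁴ + 2Aq²p² + p⁴ ≠ 0. Define q' = q - 4qp²(2Bq⁴ + Aq² + p²)/D and p' = -p + (q' - q)·(A(q' + q) + 2B(3q' - q)q²)/(2p) + (q' - q)²·(2Bq³ + Aq)²/(2p³). Then p'² + A·q'² + B·q'⁴ = p² + A·q² + B·q⁴, i.e. the discrete map (q, p) ↦ (q', p') induced by tripling a point on the elliptic curve y² + Ax² + Bx⁴ - E = 0 preserves the Hamiltonian H = p² + Aq² + Bq⁴ of the Duffing oscillator. -/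
/-!
Let `c₁, c₂` be the Taylor coefficients of order one and two at `q` of the branch of the level curve
`H = H(q, p)` through `(q, p)`. For the osculating parabola `y(t) = p + c₁ t + c₂ t²`, the quartic
`H(q + t, y(t)) - H(q, p)` is divisible by `t³`, and its remaining linear factor is a multiple of
`D t + 4 q p² (p² + A q² + 2 B q⁴)`, which vanishes at `t = q' - q`. Hence `(q', y(q' - q))`, and with
it `(q', p') = (q', -y(q' - q))`, lies on the level set of `(q, p)`.
-/

namespace Duffing

variable {K : Type*}

def hamiltonian [CommRing K] (A B q p : K) : K := p ^ 2 + A * q ^ 2 + B * q ^ 4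

theorem hamiltonian_parabola_sub [CommRing K] {A B q p c₁ c₂ : K}
    (hc₁ : p * c₁ = -(A * q + 2 * B * q ^ 3)) (hc₂ : c₁ ^ 2 + 2 * p * c₂ + A + 6 * B * q ^ 2 = 0)
    (t : K) :
    hamiltonian A B (q + t) (p + c₁ * t + c₂ * t ^ 2) - hamiltonian A B q p =
      t ^ 3 * ((B + c₂ ^ 2) * t + 4 * B * q + 2 * c₁ * c₂) := by
  unfold hamiltonian
  linear_combination (2 * t) * hc₁ + t ^ 2 * hc₂

section Osculating

variable [Field K] (A B q p : K)

def tangentSlope : K := -(A * q + 2 * B * q ^ 3) / p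

def halfCurvature : K := -((A + 6 * B * q ^ 2) * p ^ 2 + (A * q + 2 * B * q ^ 3) ^ 2) / (2 * p ^ 3)

def triplingDenom : K := (p ^ 2 + A * q ^ 2 + 2 * B * q ^ 4) ^ 2 + 4 * B * q ^ 4 * p ^ 2

variable {A B q p}

theorem mul_tangentSlope (hp : p ≠ 0) : p * tangentSlope A B q p = -(A * q + 2 * B * q ^ 3) := by
  unfold tangentSlope
  field_simp

theorem tangentSlope_sq_add_two_mul_halfCurvature [NeZero (2 : K)] (hp : p ≠ 0) :
    tangentSlope A B q p ^ 2 + 2 * p * halfCurvature A B q p + A + 6 * B * q ^ 2 = 0 := by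
  unfold tangentSlope halfCurvature
  field_simp
  ring

theorem residual_factor_eq [NeZero (2 : K)] (hp : p ≠ 0) (t : K) :
    (B + halfCurvature A B q p ^ 2) * t + 4 * B * q
        + 2 * tangentSlope A B q p * halfCurvature A B q p =
      ((A + 2 * B * q ^ 2) ^ 2 + 4 * B * p ^ 2) / (2 * p ^ 3) ^ 2 *
        (triplingDenom A B q p * t + 4 * q * p ^ 2 * (p ^ 2 + A * q ^ 2 + 2 * B * q ^ 4)) := by
  unfold tangentSlope halfCurvature triplingDenom
  field_simp
  ring

end Osculating

end Duffing

open Duffing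

/-- Proposition 2, tripling map: the discrete map `(q,p) ↦ (q',p')`
induced by tripling a point on the elliptic curve `y² + Ax² + Bx⁴ - E = 0` preserves
the Duffing Hamiltonian `H = p² + Aq² + Bq⁴`. -/
theorem duffing_tripling_map_preserves_hamiltonian
    (A B q p D q' p' : ℂ)
    (hp : p ≠ 0)
    (hD : D = 4 * B ^ 2 * q ^ 8 + 4 * A * B * q ^ 6 + 8 * B * q ^ 4 * p ^ 2
        + A ^ 2 * q ^ 4 + 2 * A * q ^ 2 * p ^ 2 + p ^ 4)
    (hD0 : D ≠ 0)
    (hq' : q' = q - 4 * q * p ^ 2 * (2 * B * q ^ 4 + A * q ^ 2 + p ^ 2) / D)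
    (hp' : p' = -p + (q' - q) * (A * (q' + q) + 2 * B * (3 * q' - q) * q ^ 2) / (2 * p)
        + (q' - q) ^ 2 * (2 * B * q ^ 3 + A * q) ^ 2 / (2 * p ^ 3)) :
    p' ^ 2 + A * q' ^ 2 + B * q' ^ 4 = p ^ 2 + A * q ^ 2 + B * q ^ 4 := by
  set t := q' - q with ht
  have hroot : triplingDenom A B q p * t + 4 * q * p ^ 2 * (p ^ 2 + A * q ^ 2 + 2 * B * q ^ 4) = 0 := by
    have hDt : triplingDenom A B q p = D := by rw [hD, triplingDenom]; ring
    rw [hDt, ht, hq']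
    field_simp
    ring
  have hp'_eq : p' = -(p + tangentSlope A B q p * t + halfCurvature A B q p * t ^ 2) := by
    rw [hp', ht, tangentSlope, halfCurvature]
    field_simp
    ring
  have hH := hamiltonian_parabola_sub (mul_tangentSlope (A := A) (B := B) (q := q) hp)
    (tangentSlope_sq_add_two_mul_halfCurvature hp) t
  rw [residual_factor_eq hp, hroot, mul_zero, mul_zero, sub_eq_zero] at hH
  rw [show q' = q + t by ring, hp'_eq, neg_sq]
  exact hH
end

section
/- (Proposition 2, doubling map: valence two / area doubling.) Let A, B ∈ ℝ with B < 0 and set s = Real.sqrt (-B). Define F : ℝ × ℝ → ℝ × ℝ by F(q, p) = ( (2Bq⁴ + Aq² + p²)/(2·s·q·p), (1/(4s))·((4Bq⁴ - p²)/q² + q²(4B²q⁴ + 4ABq² + A²)/p²) ). Then at every point (q, p) with q ≠ 0 and p ≠ 0, F is differentiable and the determinant of its derivative (Jacobian determinant) equals 2; i.e. the doubling map is a canonical transformation of valence two, doubling the area element dq∧dp. -/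
/-! The Jacobian determinant of a plane map is `∂_q f ∂_p g - ∂_p f ∂_q g`, read off from the
derivatives of the two coordinate slices. For the doubling map these partial derivatives are
rational in `q, p` (using `4B²q⁴ + 4ABq² + A² = (2Bq² + A)²`), and after substituting
`B = -s²` the determinant collapses to the constant `2`. -/

theorem LinearMap.det_prod_eq {R : Type*} [CommRing R] (L : R × R →ₗ[R] R × R) :
    L.det = (L (1, 0)).1 * (L (0, 1)).2 - (L (0, 1)).1 * (L (1, 0)).2 := by
  rw [← LinearMap.det_toMatrix (Module.Basis.finTwoProd R), Matrix.det_fin_two]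
  simp [LinearMap.toMatrix_apply]

section Slices

variable {𝕜 E : Type*} [NontriviallyNormedField 𝕜] [NormedAddCommGroup E] [NormedSpace 𝕜 E]
  {F : 𝕜 × 𝕜 → E} {F' : 𝕜 × 𝕜 →L[𝕜] E} {q p : 𝕜}

theorem HasFDerivAt.hasDerivAt_fst_slice (h : HasFDerivAt F F' (q, p)) :
    HasDerivAt (fun t ↦ F (t, p)) (F' (1, 0)) q :=
  h.comp_hasDerivAt q ((hasDerivAt_id q).prodMk (hasDerivAt_const q p))

theorem HasFDerivAt.hasDerivAt_snd_slice (h : HasFDerivAt F F' (q, p)) :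
    HasDerivAt (fun t ↦ F (q, t)) (F' (0, 1)) p :=
  h.comp_hasDerivAt p ((hasDerivAt_const p q).prodMk (hasDerivAt_id p))

end Slices

theorem DifferentiableAt.det_fderiv_eq_of_hasDerivAt_slices {𝕜 : Type*}
    [NontriviallyNormedField 𝕜] {F : 𝕜 × 𝕜 → 𝕜 × 𝕜} {q p : 𝕜} {u v : 𝕜 × 𝕜}
    (hF : DifferentiableAt 𝕜 F (q, p))
    (hu : HasDerivAt (fun t ↦ F (t, p)) u q) (hv : HasDerivAt (fun t ↦ F (q, t)) v p) :
    (fderiv 𝕜 F (q, p)).det = u.1 * v.2 - v.1 * u.2 := by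
  rw [ContinuousLinearMap.det, LinearMap.det_prod_eq, ContinuousLinearMap.coe_coe,
    hF.hasFDerivAt.hasDerivAt_fst_slice.unique hu, hF.hasFDerivAt.hasDerivAt_snd_slice.unique hv]

noncomputable def duffingDoubling (A B s : ℝ) (x : ℝ × ℝ) : ℝ × ℝ :=
  ((2 * B * x.1 ^ 4 + A * x.1 ^ 2 + x.2 ^ 2) / (2 * s * x.1 * x.2),
    1 / (4 * s) * ((4 * B * x.1 ^ 4 - x.2 ^ 2) / x.1 ^ 2
      + x.1 ^ 2 * (4 * B ^ 2 * x.1 ^ 4 + 4 * A * B * x.1 ^ 2 + A ^ 2) / x.2 ^ 2))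

section DuffingDoubling

variable {A B s q p : ℝ}

theorem differentiableAt_duffingDoubling (hs : s ≠ 0) (hq : q ≠ 0) (hp : p ≠ 0) :
    DifferentiableAt ℝ (duffingDoubling A B s) (q, p) := by
  unfold duffingDoubling
  fun_prop (disch := simp [*])

theorem hasDerivAt_duffingDoubling_fst_slice (hs : s ≠ 0) (hq : q ≠ 0) (hp : p ≠ 0) :
    HasDerivAt (fun t ↦ duffingDoubling A B s (t, p))
      (((6 * B * q ^ 2 + A) * q ^ 2 - p ^ 2) / (2 * s * q ^ 2 * p),
        (4 * B * q + p ^ 2 / q ^ 3 + q * (2 * B * q ^ 2 + A) * (6 * B * q ^ 2 + A) / p ^ 2)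
          / (2 * s)) q := by
  have hf := ((((hasDerivAt_pow 4 q).const_mul (2 * B)).add
    ((hasDerivAt_pow 2 q).const_mul A)).add_const (p ^ 2)).div
      (((hasDerivAt_id q).const_mul (2 * s)).mul_const p) (by simp [*])
  have hg := (((((hasDerivAt_pow 4 q).const_mul (4 * B)).sub_const (p ^ 2)).div
    (hasDerivAt_pow 2 q) (by simp [*])).add (((hasDerivAt_pow 2 q).mul
      ((((hasDerivAt_pow 4 q).const_mul (4 * B ^ 2)).add
        ((hasDerivAt_pow 2 q).const_mul (4 * A * B))).add_const (A ^ 2))).div_const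
          (p ^ 2))).const_mul (1 / (4 * s))
  refine (hf.prodMk hg).congr_deriv ?_
  ext <;> simp only [id, Pi.add_apply] <;> field_simp <;> ring

theorem hasDerivAt_duffingDoubling_snd_slice (hs : s ≠ 0) (hq : q ≠ 0) (hp : p ≠ 0) :
    HasDerivAt (fun t ↦ duffingDoubling A B s (q, t))
      ((p ^ 2 - (2 * B * q ^ 2 + A) * q ^ 2) / (2 * s * q * p ^ 2),
        -(p / q ^ 2 + q ^ 2 * (2 * B * q ^ 2 + A) ^ 2 / p ^ 3) / (2 * s)) p := by
  have hf := ((hasDerivAt_pow 2 p).const_add (2 * B * q ^ 4 + A * q ^ 2)).div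
    ((hasDerivAt_id p).const_mul (2 * s * q)) (by simp [*])
  have hg := ((((hasDerivAt_pow 2 p).const_sub (4 * B * q ^ 4)).div_const (q ^ 2)).add
    ((hasDerivAt_const p (q ^ 2 * (4 * B ^ 2 * q ^ 4 + 4 * A * B * q ^ 2 + A ^ 2))).div
      (hasDerivAt_pow 2 p) (by simp [*]))).const_mul (1 / (4 * s))
  refine (hf.prodMk hg).congr_deriv ?_
  ext <;> simp only [id] <;> field_simp <;> ring

theorem det_fderiv_duffingDoubling (hs : s ^ 2 = -B) (hs0 : s ≠ 0) (hq : q ≠ 0) (hp : p ≠ 0) :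
    (fderiv ℝ (duffingDoubling A B s) (q, p)).det = 2 := by
  rw [(differentiableAt_duffingDoubling hs0 hq hp).det_fderiv_eq_of_hasDerivAt_slices
    (hasDerivAt_duffingDoubling_fst_slice hs0 hq hp)
    (hasDerivAt_duffingDoubling_snd_slice hs0 hq hp)]
  obtain rfl : B = -s ^ 2 := by linarith
  field_simp
  ring

end DuffingDoubling

/-- Proposition 2, doubling map: valence two: the doubling map `F` on
the phase plane of the Duffing oscillator is differentiable at every point with
`q ≠ 0`, `p ≠ 0`, and its Jacobian determinant equals `2`, i.e. it is a canonical
transformation of valence two, doubling the area element `dq ∧ dp`. -/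
theorem duffing_doubling_map_valence_two
    (A B s : ℝ) (hB : B < 0) (hs : s = Real.sqrt (-B))
    (F : ℝ × ℝ → ℝ × ℝ)
    (hF : ∀ x : ℝ × ℝ,
      F x = ((2 * B * x.1 ^ 4 + A * x.1 ^ 2 + x.2 ^ 2) / (2 * s * x.1 * x.2),
        1 / (4 * s) * ((4 * B * x.1 ^ 4 - x.2 ^ 2) / x.1 ^ 2
          + x.1 ^ 2 * (4 * B ^ 2 * x.1 ^ 4 + 4 * A * B * x.1 ^ 2 + A ^ 2) / x.2 ^ 2))) :
    ∀ q p : ℝ, q ≠ 0 → p ≠ 0 →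
      DifferentiableAt ℝ F (q, p) ∧ (fderiv ℝ F (q, p)).det = 2 := by
  obtain rfl : F = duffingDoubling A B s := funext hF
  have hs2 : s ^ 2 = -B := by rw [hs, Real.sq_sqrt (neg_nonneg.mpr hB.le)]
  have hs0 : s ≠ 0 := by rw [hs]; exact (Real.sqrt_pos.mpr (neg_pos.mpr hB)).ne'
  intro q p hq hp
  exact ⟨differentiableAt_duffingDoubling hs0 hq hp, det_fderiv_duffingDoubling hs2 hs0 hq hp⟩
end

section
/- (Invariant of the standard-like (Suris) discretization of the Duffing equation.) Let A, B, h ∈ ℝ with h ≠ 0, and let (qₙ)ₙ∈ℤ be a real sequence such that for every n, h⁻² + 4B·qₙ² ≠ 0 and q_{n+1} - 2qₙ + q_{n-1} = (-4A·qₙ - 8B·qₙ³)/(h⁻² + 4B·qₙ²). Then the quantity Iₙ = ((q_{n+1} - qₙ)/h)² + 4A·qₙ·q_{n+1} + 4B·qₙ²·q_{n+1}² is independent of n: Iₙ = I_{n-1} for all n. Hence the standard-like discretization of the Duffing equation admits a nontrivial symmetric invariant integral and is integrable. -/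
/-- Invariant of the standard-like (Suris) discretization of the Duffing
equation: for any real sequence `(qₙ)` satisfying
`q_{n+1} - 2qₙ + q_{n-1} = (-4Aqₙ - 8Bqₙ³)/(h⁻² + 4Bqₙ²)`, the quantity
`Iₙ = ((q_{n+1} - qₙ)/h)² + 4A qₙ q_{n+1} + 4B qₙ² q_{n+1}²` is independent of `n`. -/
theorem suris_discretization_duffing_invariant
    (A B h : ℝ) (hh : h ≠ 0) (q : ℤ → ℝ)
    (hden : ∀ n : ℤ, h⁻¹ ^ 2 + 4 * B * (q n) ^ 2 ≠ 0)
    (hrec : ∀ n : ℤ, q (n + 1) - 2 * q n + q (n - 1) =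
        (-4 * A * q n - 8 * B * (q n) ^ 3) / (h⁻¹ ^ 2 + 4 * B * (q n) ^ 2)) :
    ∀ n : ℤ,
      ((q (n + 1) - q n) / h) ^ 2 + 4 * A * q n * q (n + 1)
          + 4 * B * (q n) ^ 2 * (q (n + 1)) ^ 2
        = ((q n - q (n - 1)) / h) ^ 2 + 4 * A * q (n - 1) * q n
          + 4 * B * (q (n - 1)) ^ 2 * (q n) ^ 2 := by
  intro n
  have hd := hden n
  have key : (q (n + 1) - 2 * q n + q (n - 1)) * (h⁻¹ ^ 2 + 4 * B * (q n) ^ 2)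
      = -4 * A * q n - 8 * B * (q n) ^ 3 := by
    rw [hrec n, div_mul_cancel₀ _ hd]
  have h2 : h⁻¹ = 1 / h := one_div h ▸ rfl
  field_simp at key ⊢
  linear_combination (q (n + 1) - q (n - 1)) * key
end
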